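/- Let σ > 0, θ(r) = (σ²/2 + √(σ⁴/4 + 2σ² r))/σ², and let F be a probability distribution on (0,∞) with discount function h_F(t) = ∫₀^∞ e^{-r t} dF(r). Then ∫₀^∞ ((θ(r)-1)/r) dF(r) = ∫₀^∞ h_F(s) ((√2/σ) f(s; σ²/8) - 1/2) ds, where f(s;C) = (1/√(πs)) (e^{-C s} + √(π C s) erf(√(C s))), assuming the relevant integrals are finite so Fubini's theorem applies. -/

import Mathlib

open Real MeasureTheory Set

/-- The Gauss error function. -/
noncomputable def erf (x : ℝ) : ℝ := (2 / Real.sqrt π) * ∫ t in (0:ℝ)..x, Real.exp (-t^2)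

/-- The kernel `f(s; C)`. -/
noncomputable def fker (s C : ℝ) : ℝ :=
  (1 / Real.sqrt (π * s)) * (Real.exp (-C * s) + Real.sqrt (π * C * s) * erf (Real.sqrt (C * s)))

/-- The positive root `θ(r)` of `(1/2)σ²θ² - (1/2)σ²θ - r = 0`. -/
noncomputable def θfun (σ r : ℝ) : ℝ :=
  (σ^2 / 2 + Real.sqrt (σ^4 / 4 + 2 * σ^2 * r)) / σ^2

/-- The discount function induced by the weighting distribution `F`. -/
noncomputable def discount (F : Measure ℝ) (t : ℝ) : ℝ := ∫ r, Real.exp (-r * t) ∂F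

open Filter Topology

/-!
For `r > 0` the kernel has an explicit Laplace transform: with `C = σ² / 8`,
`u ↦ (√(r + C) erf √((r + C) u) - e^{-r u} √C (erf √(C u) - 1)) / r` is a primitive of
`e^{-r u} (f(u; C) - √C)`, so `∫₀^∞ e^{-r s} (f(s; C) - √C) ds = (√(r + C) - √C) / r`, and
`θ(r) - 1 = (√2 / σ) (√(r + C) - √C)`. The Gaussian tail bound `1 - erf x ≤ e^{-x²} / (x √π)`
makes `f(s; C) - √C` nonnegative, so Tonelli's theorem lets us integrate the transform against `F`
and swap the two integrals.
-/

section erf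

lemma hasDerivAt_erf (x : ℝ) : HasDerivAt erf (2 / √π * exp (-x ^ 2)) x :=
  ((Continuous.integral_hasStrictDerivAt (by fun_prop) 0 x).hasDerivAt).const_mul _

@[fun_prop]
lemma continuous_erf : Continuous erf :=
  continuous_iff_continuousAt.2 fun x => (hasDerivAt_erf x).continuousAt

lemma erf_zero : erf 0 = 0 := by simp [erf]

lemma integrable_exp_neg_sq : Integrable fun t : ℝ => exp (-t ^ 2) := by
  simpa using integrable_exp_neg_mul_sq one_pos

lemma integral_exp_neg_sq_Ioi_zero : ∫ t in Ioi (0 : ℝ), exp (-t ^ 2) = √π / 2 := by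
  simpa using integral_gaussian_Ioi 1

lemma one_sub_erf (x : ℝ) : 1 - erf x = 2 / √π * ∫ t in Ioi x, exp (-t ^ 2) := by
  have hsplit := intervalIntegral.integral_interval_add_Ioi
    integrable_exp_neg_sq.integrableOn integrable_exp_neg_sq.integrableOn (a := 0) (b := x)
  rw [integral_exp_neg_sq_Ioi_zero] at hsplit
  rw [erf, eq_sub_of_add_eq' hsplit]
  field_simp

lemma tendsto_erf_atTop : Tendsto erf atTop (𝓝 1) := by
  have h := (intervalIntegral_tendsto_integral_Ioi 0 integrable_exp_neg_sq.integrableOn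
    tendsto_id).const_mul (2 / √π)
  rwa [integral_exp_neg_sq_Ioi_zero, div_mul_div_cancel₀ (by positivity), div_self two_ne_zero]
    at h

lemma integrable_mul_exp_neg_sq : Integrable fun t : ℝ => t * exp (-t ^ 2) := by
  simpa using integrable_mul_exp_neg_mul_sq one_pos

lemma integral_Ioi_mul_exp_neg_sq (x : ℝ) :
    ∫ t in Ioi x, t * exp (-t ^ 2) = exp (-x ^ 2) / 2 := by
  have hderiv : ∀ t ∈ Ici x, HasDerivAt (fun t => -exp (-t ^ 2) / 2) (t * exp (-t ^ 2)) t :=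
    fun t _ => ((hasDerivAt_pow 2 t).neg.exp.neg.div_const 2).congr_deriv (by simp; ring)
  have hlim : Tendsto (fun t : ℝ => -exp (-t ^ 2) / 2) atTop (𝓝 0) := by
    simpa using ((tendsto_exp_atBot.comp
      (tendsto_neg_atTop_atBot.comp (tendsto_pow_atTop two_ne_zero))).neg.div_const 2)
  rw [integral_Ioi_of_hasDerivAt_of_tendsto' hderiv integrable_mul_exp_neg_sq.integrableOn hlim]
  ring

lemma one_sub_erf_le {x : ℝ} (hx : 0 < x) : 1 - erf x ≤ exp (-x ^ 2) / (x * √π) := by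
  have htail : ∫ t in Ioi x, exp (-t ^ 2) ≤ ∫ t in Ioi x, t * exp (-t ^ 2) / x := by
    refine setIntegral_mono_on integrable_exp_neg_sq.integrableOn
      (integrable_mul_exp_neg_sq.integrableOn.div_const x) measurableSet_Ioi fun t ht => ?_
    rw [le_div_iff₀ hx, mul_comm]
    exact mul_le_mul_of_nonneg_right (le_of_lt ht) (exp_nonneg _)
  rw [integral_div, integral_Ioi_mul_exp_neg_sq] at htail
  calc 1 - erf x = 2 / √π * ∫ t in Ioi x, exp (-t ^ 2) := one_sub_erf x
    _ ≤ 2 / √π * (exp (-x ^ 2) / 2 / x) := by gcongr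
    _ = exp (-x ^ 2) / (x * √π) := by field_simp

lemma tendsto_erf_sqrt_mul_atTop {c : ℝ} (hc : 0 < c) :
    Tendsto (fun u => erf √(c * u)) atTop (𝓝 1) :=
  tendsto_erf_atTop.comp (tendsto_sqrt_atTop.comp (tendsto_id.const_mul_atTop hc))

lemma hasDerivAt_erf_sqrt_mul {c s : ℝ} (hc : 0 < c) (hs : 0 < s) :
    HasDerivAt (fun u => erf √(c * u)) (√c * exp (-(c * s)) / √(π * s)) s := by
  have hcs : 0 < c * s := mul_pos hc hs
  refine ((hasDerivAt_erf √(c * s)).comp s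
    ((hasDerivAt_sqrt hcs.ne').comp s ((hasDerivAt_id s).const_mul c))).congr_deriv ?_
  rw [sq_sqrt hcs.le, sqrt_mul pi_pos.le, sqrt_mul hc.le]
  have hc' : √c ≠ 0 := by positivity
  have hs' : √s ≠ 0 := by positivity
  field_simp
  rw [sq_sqrt hc.le]

end erf

section kernel

variable {r C s : ℝ}

lemma fker_eq (hs : 0 < s) :
    fker s C = exp (-C * s) / √(π * s) + √C * erf √(C * s) := by
  have hπs : √(π * s) ≠ 0 := by positivity
  have hsplit : √(π * C * s) = √(π * s) * √C := by
    rw [← sqrt_mul (by positivity)]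
    ring_nf
  rw [fker, hsplit]
  field_simp

lemma sqrt_le_fker (hC : 0 < C) (hs : 0 < s) : √C ≤ fker s C := by
  have htail := one_sub_erf_le (show 0 < √(C * s) by positivity)
  rw [sq_sqrt (by positivity)] at htail
  have hsqrt : √(C * s) * √π = √C * √(π * s) := by
    rw [← sqrt_mul (by positivity), ← sqrt_mul hC.le]
    ring_nf
  have hC' : √C ≠ 0 := by positivity
  have hπs : √(π * s) ≠ 0 := by positivity
  calc √C = √C * (1 - erf √(C * s)) + √C * erf √(C * s) := by ring
    _ ≤ √C * (exp (-(C * s)) / (√(C * s) * √π)) + √C * erf √(C * s) := by gcongr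
    _ = fker s C := by
      rw [fker_eq hs, hsqrt, neg_mul]
      field_simp

@[fun_prop]
lemma measurable_fker (C : ℝ) : Measurable fun s => fker s C := by
  unfold fker
  fun_prop

noncomputable def fkerPrimitive (r C u : ℝ) : ℝ :=
  (√(r + C) * erf √((r + C) * u) - exp (-r * u) * √C * (erf √(C * u) - 1)) / r

lemma hasDerivAt_fkerPrimitive (hr : 0 < r) (hC : 0 < C) (hs : 0 < s) :
    HasDerivAt (fkerPrimitive r C) (exp (-r * s) * (fker s C - √C)) s := by
  have hA := (hasDerivAt_erf_sqrt_mul (c := r + C) (by positivity) hs).const_mul √(r + C)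
  have hB := ((((hasDerivAt_id s).const_mul (-r)).exp.mul_const √C).mul
    ((hasDerivAt_erf_sqrt_mul hC hs).sub_const 1))
  refine ((hA.sub hB).div_const r).congr_deriv ?_
  have hexp : exp (-((r + C) * s)) = exp (-r * s) * exp (-(C * s)) := by
    rw [← exp_add]; ring_nf
  have hπs : √(π * s) ≠ 0 := by positivity
  rw [fker_eq hs, hexp, neg_mul C, id_eq]
  field_simp
  rw [sq_sqrt (by positivity)]
  linear_combination (-exp (-(C * s))) * mul_self_sqrt hC.le

lemma tendsto_fkerPrimitive_atTop (hr : 0 < r) (hC : 0 < C) :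
    Tendsto (fkerPrimitive r C) atTop (𝓝 (√(r + C) / r)) := by
  have hexp : Tendsto (fun u => exp (-r * u)) atTop (𝓝 0) :=
    (tendsto_exp_neg_atTop_nhds_zero.comp (tendsto_id.const_mul_atTop hr)).congr
      fun u => by simp [neg_mul]
  unfold fkerPrimitive
  convert (((tendsto_erf_sqrt_mul_atTop (c := r + C) (by positivity)).const_mul √(r + C)).sub
    (((hexp.mul_const √C).mul ((tendsto_erf_sqrt_mul_atTop hC).sub_const 1)))).div_const r
    using 2
  simp

lemma exp_mul_fker_sub_sqrt_nonneg (hC : 0 < C) (hs : 0 < s) :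
    0 ≤ exp (-r * s) * (fker s C - √C) :=
  mul_nonneg (exp_nonneg _) (sub_nonneg.2 (sqrt_le_fker hC hs))

lemma integrableOn_exp_mul_fker_sub_sqrt (hr : 0 < r) (hC : 0 < C) :
    IntegrableOn (fun s => exp (-r * s) * (fker s C - √C)) (Ioi 0) :=
  integrableOn_Ioi_deriv_of_nonneg (by unfold fkerPrimitive; fun_prop)
    (fun _ hs => hasDerivAt_fkerPrimitive hr hC hs)
    (fun _ hs => exp_mul_fker_sub_sqrt_nonneg hC hs) (tendsto_fkerPrimitive_atTop hr hC)

lemma integral_exp_mul_fker_sub_sqrt (hr : 0 < r) (hC : 0 < C) :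
    ∫ s in Ioi 0, exp (-r * s) * (fker s C - √C) = (√(r + C) - √C) / r := by
  rw [integral_Ioi_of_hasDerivAt_of_nonneg (by unfold fkerPrimitive; fun_prop)
    (fun _ hs => hasDerivAt_fkerPrimitive hr hC hs)
    (fun _ hs => exp_mul_fker_sub_sqrt_nonneg hC hs) (tendsto_fkerPrimitive_atTop hr hC)]
  simp [fkerPrimitive, erf_zero]
  ring

end kernel

lemma integral_eq_integral_discount_mul_of_laplace {F : Measure ℝ} [SFinite F] {g φ : ℝ → ℝ}
    (hF : ∀ᵐ r ∂F, 0 < r) (hg : Measurable g) (hg_nonneg : ∀ s ∈ Ioi (0 : ℝ), 0 ≤ g s)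
    (hφ : Integrable φ F)
    (hint : ∀ r > 0, IntegrableOn (fun s => exp (-r * s) * g s) (Ioi 0))
    (hlap : ∀ r > 0, ∫ s in Ioi 0, exp (-r * s) * g s = φ r) :
    ∫ r, φ r ∂F = ∫ s in Ioi 0, discount F s * g s := by
  have hprod : Integrable (Function.uncurry fun r s => exp (-r * s) * g s)
      (F.prod (volume.restrict (Ioi 0))) := by
    rw [integrable_prod_iff (by fun_prop)]
    refine ⟨hF.mono hint, hφ.congr ?_⟩
    filter_upwards [hF] with r hr
    rw [← hlap r hr]
    refine setIntegral_congr_fun measurableSet_Ioi fun s hs => ?_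
    exact (norm_of_nonneg (mul_nonneg (exp_nonneg _) (hg_nonneg s hs))).symm
  calc ∫ r, φ r ∂F = ∫ r, (∫ s in Ioi 0, exp (-r * s) * g s) ∂F :=
        integral_congr_ae (hF.mono fun r hr => (hlap r hr).symm)
    _ = ∫ s in Ioi 0, ∫ r, exp (-r * s) * g s ∂F := integral_integral_swap hprod
    _ = ∫ s in Ioi 0, discount F s * g s := by simp only [discount, integral_mul_const]

lemma sqrt_two_div_mul_sqrt_sq_div_eight {σ : ℝ} (hσ : 0 < σ) :
    √2 / σ * √(σ ^ 2 / 8) = 1 / 2 := by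
  rw [show σ ^ 2 / 8 = (σ * √2 / 4) ^ 2 by ring_nf; rw [sq_sqrt zero_le_two]; ring,
    sqrt_sq (by positivity)]
  field_simp
  rw [sq_sqrt zero_le_two]
  ring

lemma θfun_sub_one {σ : ℝ} (hσ : 0 < σ) (r : ℝ) :
    θfun σ r - 1 = √2 / σ * (√(r + σ ^ 2 / 8) - √(σ ^ 2 / 8)) := by
  rw [θfun, show σ ^ 4 / 4 + 2 * σ ^ 2 * r = (σ * √2) ^ 2 * (r + σ ^ 2 / 8) by
      ring_nf; rw [sq_sqrt zero_le_two]; ring,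
    sqrt_mul (by positivity), sqrt_sq (by positivity), mul_sub,
    sqrt_two_div_mul_sqrt_sq_div_eight hσ]
  field_simp
  ring

lemma sqrt_two_div_mul_fker_sub_half {σ : ℝ} (hσ : 0 < σ) (s : ℝ) :
    √2 / σ * fker s (σ ^ 2 / 8) - 1 / 2 = √2 / σ * (fker s (σ ^ 2 / 8) - √(σ ^ 2 / 8)) := by
  rw [mul_sub, sqrt_two_div_mul_sqrt_sq_div_eight hσ]

theorem stmt7_general (σ : ℝ) (hσ : 0 < σ) (F : Measure ℝ) [IsProbabilityMeasure F]
    (hFc : F (Ioi (0:ℝ))ᶜ = 0)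
    (hInt1 : Integrable (fun r => (θfun σ r - 1) / r) F) :
    ∫ r, (θfun σ r - 1) / r ∂F =
      ∫ s in Ioi (0:ℝ), discount F s * ((Real.sqrt 2 / σ) * fker s (σ^2 / 8) - 1/2) := by
  have hC : 0 < σ ^ 2 / 8 := by positivity
  simp_rw [sqrt_two_div_mul_fker_sub_half hσ]
  refine integral_eq_integral_discount_mul_of_laplace (mem_ae_iff.2 hFc)
    (((measurable_fker _).sub_const _).const_mul _)
    (fun s hs => mul_nonneg (by positivity) (sub_nonneg.2 (sqrt_le_fker hC hs))) hInt1
    (fun r hr => ?_) fun r hr => ?_ <;> simp_rw [mul_left_comm (exp _)]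
  · exact (integrableOn_exp_mul_fker_sub_sqrt hr hC).const_mul _
  · rw [integral_const_mul, integral_exp_mul_fker_sub_sqrt hr hC, θfun_sub_one hσ r,
      mul_div_assoc]

theorem stmt7 (σ : ℝ) (hσ : 0 < σ) (F : Measure ℝ) [IsProbabilityMeasure F]
    (hFc : F (Ioi (0:ℝ))ᶜ = 0)
    (hInt1 : Integrable (fun r => (θfun σ r - 1) / r) F)
    (hInt2 : IntegrableOn
      (fun s => discount F s * ((Real.sqrt 2 / σ) * fker s (σ^2 / 8) - 1/2)) (Ioi (0:ℝ))) :
    ∫ r, (θfun σ r - 1) / r ∂F =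
      ∫ s in Ioi (0:ℝ), discount F s * ((Real.sqrt 2 / σ) * fker s (σ^2 / 8) - 1/2) :=
  stmt7_general σ hσ F hFc hInt1
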